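/- For any h ∈ ℝⁿ and densities ρ₁,…,ρₙ > 0, the determinant of −Γ·diag(h₁,…,hₙ) equals (−1)ⁿ · hₙ · ∏_{i=1}^{n−1} hᵢ(1 − γᵢ). Equivalently, f_n(0, 0, γ) = (−1)ⁿ hₙ ∏_{i=1}^{n−1} hᵢ(1−γᵢ), where f_n(λ,u,γ) := det((diag(u) − λIₙ)² − Γ·diag(h)). -/

import Mathlib

/-!
Multiplying row `i` of `Γ` by `ρᵢ` turns it into the "min matrix" `(ρ_{min(i,k)})`; subtracting
from each row of that matrix the row above leaves an upper triangular matrix with diagonal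
`ρ₁, ρ₂ - ρ₁, …, ρₙ - ρₙ₋₁`. Hence `det Γ = ∏ᵢ (ρᵢ₊₁ - ρᵢ)/ρᵢ₊₁ = ∏ᵢ (1 - γᵢ)`, and
`det(-Γ diag h) = (-1)ⁿ det Γ ∏ hᵢ`.
-/

open Matrix

namespace MLSW9

noncomputable def alpha (n : ℕ) (ρ : Fin n → ℝ) (i k : Fin n) : ℝ :=
  if k < i then ρ k / ρ i else 1

noncomputable def Gam (n : ℕ) (ρ : Fin n → ℝ) : Matrix (Fin n) (Fin n) ℝ :=
  Matrix.of (alpha n ρ)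

/-- The density ratio `γᵢ = ρᵢ/ρᵢ₊₁`. -/
noncomputable def gam (n : ℕ) (ρ : Fin n → ℝ) (i : Fin (n - 1)) : ℝ :=
  ρ ⟨i.val, by have := i.isLt; omega⟩ / ρ ⟨i.val + 1, by have := i.isLt; omega⟩

theorem _root_.Matrix.det_of_min {R : Type*} [CommRing R] {m : ℕ} (f : Fin (m + 1) → R) :
    (Matrix.of fun i j => f (min i j)).det = f 0 * ∏ i : Fin m, (f i.succ - f i.castSucc) := by
  let B : Matrix (Fin (m + 1)) (Fin (m + 1)) R :=
    Matrix.of (Fin.cons (fun j => f (min 0 j)) fun i j => f (min i.succ j) - f (min i.castSucc j))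
  have hB : B.IsUpperTriangular := by
    intro i j (hji : j < i)
    induction i using Fin.cases with
    | zero => exact absurd hji (Fin.not_lt_zero j)
    | succ i =>
      have hj : j ≤ i.castSucc := Fin.le_castSucc_iff.mpr hji
      simp [B, min_eq_right hji.le, min_eq_right hj]
  calc (Matrix.of fun i j => f (min i j)).det = B.det :=
        det_eq_of_forall_row_eq_smul_add_pred 1 (fun _ => rfl) fun i j => by simp [B]
    _ = f 0 * ∏ i : Fin m, (f i.succ - f i.castSucc) := by
        rw [det_of_isUpperTriangular hB, Fin.prod_univ_succ]
        simp [B, Fin.castSucc_le_succ]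

theorem Gam_eq_diagonal_inv_mul {n : ℕ} (ρ : Fin n → ℝ) (hρ : ∀ i, ρ i ≠ 0) :
    Gam n ρ = diagonal (fun i => (ρ i)⁻¹) * Matrix.of fun i k => ρ (min i k) := by
  ext i k
  rw [diagonal_mul, Gam, of_apply, of_apply, alpha]
  split_ifs with hki
  · rw [min_eq_right hki.le, inv_mul_eq_div]
  · rw [min_eq_left (not_lt.mp hki), inv_mul_cancel₀ (hρ i)]

theorem gam_succ {m : ℕ} (ρ : Fin (m + 1) → ℝ) (i : Fin m) :
    gam (m + 1) ρ i = ρ i.castSucc / ρ i.succ := rfl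

theorem det_Gam {m : ℕ} (ρ : Fin (m + 1) → ℝ) (hρ : ∀ i, ρ i ≠ 0) :
    (Gam (m + 1) ρ).det = ∏ i : Fin m, (1 - gam (m + 1) ρ i) := by
  rw [Gam_eq_diagonal_inv_mul ρ hρ, det_mul, det_diagonal, det_of_min, Fin.prod_univ_succ,
    mul_mul_mul_comm, inv_mul_cancel₀ (hρ 0), one_mul, ← Finset.prod_mul_distrib]
  refine Finset.prod_congr rfl fun i _ => ?_
  rw [gam_succ]
  field_simp [hρ i.succ]

/-- `det(−Γ·diag(h)) = (−1)ⁿ hₙ ∏_{i=1}^{n−1} hᵢ(1−γᵢ)`; equivalently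
`f_n(0,0,γ)` equals the same quantity, where
`f_n(λ,u,γ) = det((diag(u) − λI)² − Γ diag(h))`. -/
theorem stmt9 (n : ℕ) (hn : 2 ≤ n) (ρ : Fin n → ℝ) (hρ : ∀ i, 0 < ρ i)
    (h : Fin n → ℝ) :
    (-(Gam n ρ * Matrix.diagonal h)).det =
      (-1 : ℝ) ^ n * h ⟨n - 1, by omega⟩ *
        ∏ i : Fin (n - 1),
          (h ⟨i.val, by have := i.isLt; omega⟩ * (1 - gam n ρ i)) ∧
    ((Matrix.diagonal (fun _ : Fin n => (0 : ℝ)) - (0 : ℝ) • 1) ^ 2 -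
        Gam n ρ * Matrix.diagonal h).det =
      (-1 : ℝ) ^ n * h ⟨n - 1, by omega⟩ *
        ∏ i : Fin (n - 1),
          (h ⟨i.val, by have := i.isLt; omega⟩ * (1 - gam n ρ i)) := by
  obtain ⟨m, rfl⟩ : ∃ m, n = m + 1 := ⟨n - 1, by omega⟩
  have hdet : (-(Gam (m + 1) ρ * diagonal h)).det =
      (-1 : ℝ) ^ (m + 1) * h (Fin.last m) *
        ∏ i : Fin m, (h i.castSucc * (1 - gam (m + 1) ρ i)) := by
    rw [det_neg, det_mul, det_Gam ρ fun i => (hρ i).ne', det_diagonal, Fin.prod_univ_castSucc,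
      Finset.prod_mul_distrib, Fintype.card_fin]
    ring
  have hzero : (diagonal (fun _ : Fin (m + 1) => (0 : ℝ)) - (0 : ℝ) • 1) ^ 2 -
      Gam (m + 1) ρ * diagonal h = -(Gam (m + 1) ρ * diagonal h) := by
    simp
  rw [hzero]
  exact ⟨hdet, hdet⟩

end MLSW9
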